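/- Fix δ > 0 and let h̃(y) = D₂/(y²+δ) + D₃ with D₂ = 2√(2π)/(β²(√(2π) − (1+δ)I(δ))) and D₃ = −(√(2π) + I(δ)D₂)/√(2π), assuming √(2π) − (1+δ)I(δ) ≠ 0. Then ∫ h̃(y) q(y) dy = P_z for all P_x, P_z, i.e. h̃ is an unbiased pointer for σ_z: equivalently (1/√(2π))∫ h̃ e^{-y²/2} dy = −1, (β²/√(2π))∫ h̃(y)(y²−1)e^{-y²/2} dy = 2, and ∫ h̃(y) y e^{-y²/2} dy = 0. -/

import Mathlib

/-!
Against the weight `e^{-y²/2}`, the integral `∫ h q` is `(M₀ + β Pₓ M₁ + β² (P_z + 1) M₂ / 2) / √(2π)`,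
where `M₀, M₁, M₂` are the integrals of `h e^{-y²/2}` against `1`, `y` and `y² - 1`.
For `h = D₂ / (y² + δ) + D₃` the odd moment `M₁` vanishes, `M₀ = D₂ I(δ) + D₃ √(2π)`, and, since
`(y² - 1) / (y² + δ) = 1 - (1 + δ) / (y² + δ)` while `∫ y² e^{-y²/2} = ∫ e^{-y²/2} = √(2π)`
(integration by parts), `M₂ = D₂ (√(2π) - (1 + δ) I(δ))`. The constants `D₂, D₃` are chosen exactly so
that `M₀ = -√(2π)` and `M₂ = 2√(2π) / β²`, which turns `∫ h q` into `P_z`.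
-/

open MeasureTheory Real

/-- The density of the weighted homodyne photocurrent endpoint. -/
noncomputable def q (β Px Pz y : ℝ) : ℝ :=
  (Real.exp (-y ^ 2 / 2) / Real.sqrt (2 * π)) *
    (1 + β * y * Px + β ^ 2 * (y ^ 2 - 1) * (Pz + 1) / 2)

lemma integral_eq_zero_of_odd {f : ℝ → ℝ} (hf : ∀ y, f (-y) = -f y) : ∫ y, f y = 0 := by
  have h := integral_neg_eq_self f volume
  simp only [hf, integral_neg] at h
  linarith

lemma integrable_pow_mul_exp_neg_sq_div_two (n : ℕ) :
    Integrable fun y : ℝ => y ^ n * exp (-y ^ 2 / 2) := by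
  have h := integrable_rpow_mul_exp_neg_mul_sq (b := 1 / 2) (by norm_num)
    (s := n) (by linarith [n.cast_nonneg (α := ℝ)])
  refine h.congr (Filter.Eventually.of_forall fun y => ?_)
  simp only [rpow_natCast]
  ring_nf

lemma integrable_exp_neg_sq_div_two : Integrable fun y : ℝ => exp (-y ^ 2 / 2) := by
  simpa using integrable_pow_mul_exp_neg_sq_div_two 0

lemma integral_exp_neg_sq_div_two : ∫ y : ℝ, exp (-y ^ 2 / 2) = √(2 * π) := by
  convert integral_gaussian (1 / 2) using 3 with y
  · ring_nf
  · field_simp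

lemma integral_sq_mul_exp_neg_sq_div_two :
    ∫ y : ℝ, y ^ 2 * exp (-y ^ 2 / 2) = √(2 * π) := by
  have hderiv (y : ℝ) : HasDerivAt (fun x : ℝ => x * exp (-x ^ 2 / 2))
      (exp (-y ^ 2 / 2) - y ^ 2 * exp (-y ^ 2 / 2)) y :=
    ((hasDerivAt_id' y).mul ((hasDerivAt_pow 2 y).neg.div_const 2).exp).congr_deriv (by
      simp only [Pi.neg_apply]; ring)
  have h := integral_eq_zero_of_hasDerivAt_of_integrable hderiv
    (integrable_exp_neg_sq_div_two.sub (integrable_pow_mul_exp_neg_sq_div_two 2))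
    (by simpa using integrable_pow_mul_exp_neg_sq_div_two 1)
  rw [integral_sub integrable_exp_neg_sq_div_two (integrable_pow_mul_exp_neg_sq_div_two 2),
    integral_exp_neg_sq_div_two] at h
  linarith

lemma integrable_mul_pow_mul_exp_neg_sq_div_two {h : ℝ → ℝ} (hm : AEStronglyMeasurable h)
    {C : ℝ} (hC : ∀ y, |h y| ≤ C) (n : ℕ) :
    Integrable fun y : ℝ => h y * y ^ n * exp (-y ^ 2 / 2) := by
  simpa only [mul_assoc] using
    (integrable_pow_mul_exp_neg_sq_div_two n).bdd_mul hm (Filter.Eventually.of_forall hC)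

lemma integral_mul_q {h : ℝ → ℝ} (hm : AEStronglyMeasurable h) {C : ℝ} (hC : ∀ y, |h y| ≤ C)
    (β Px Pz : ℝ) :
    ∫ y : ℝ, h y * q β Px Pz y =
      ((∫ y : ℝ, h y * exp (-y ^ 2 / 2)) + β * Px * (∫ y : ℝ, h y * y * exp (-y ^ 2 / 2)) +
        β ^ 2 * (Pz + 1) / 2 * ∫ y : ℝ, h y * (y ^ 2 - 1) * exp (-y ^ 2 / 2)) / √(2 * π) := by
  have i0 : Integrable fun y : ℝ => h y * exp (-y ^ 2 / 2) := by
    simpa using integrable_mul_pow_mul_exp_neg_sq_div_two hm hC 0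
  have i1 : Integrable fun y : ℝ => h y * y * exp (-y ^ 2 / 2) := by
    simpa using integrable_mul_pow_mul_exp_neg_sq_div_two hm hC 1
  have i2 : Integrable fun y : ℝ => h y * (y ^ 2 - 1) * exp (-y ^ 2 / 2) :=
    ((integrable_mul_pow_mul_exp_neg_sq_div_two hm hC 2).sub i0).congr
      (Filter.Eventually.of_forall fun y => by simp only [Pi.sub_apply]; ring)
  have hq (y : ℝ) : h y * q β Px Pz y = (h y * exp (-y ^ 2 / 2) +
      β * Px * (h y * y * exp (-y ^ 2 / 2)) +
      β ^ 2 * (Pz + 1) / 2 * (h y * (y ^ 2 - 1) * exp (-y ^ 2 / 2))) / √(2 * π) := by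
    simp only [q]; ring
  simp_rw [hq]
  rw [integral_div, integral_add, integral_add i0 (i1.const_mul _), integral_const_mul,
    integral_const_mul]
  exacts [i0.add (i1.const_mul _), i2.const_mul _]

noncomputable def pointer (δ c d y : ℝ) : ℝ := c / (y ^ 2 + δ) + d

lemma measurable_pointer (δ c d : ℝ) : Measurable (pointer δ c d) := by
  unfold pointer; fun_prop

lemma abs_pointer_le {δ : ℝ} (hδ : 0 < δ) (c d y : ℝ) : |pointer δ c d y| ≤ |c| / δ + |d| := by
  have hpos : 0 < y ^ 2 + δ := by positivity
  calc |c / (y ^ 2 + δ) + d| ≤ |c| / (y ^ 2 + δ) + |d| := by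
        rw [← abs_of_pos hpos, ← abs_div, abs_of_pos hpos]; exact abs_add_le _ _
    _ ≤ |c| / δ + |d| := by gcongr; nlinarith [sq_nonneg y]

lemma integrable_exp_neg_sq_div_two_div_sq_add {δ : ℝ} (hδ : 0 < δ) :
    Integrable fun y : ℝ => exp (-y ^ 2 / 2) / (y ^ 2 + δ) := by
  simpa [pointer, div_eq_inv_mul] using integrable_mul_pow_mul_exp_neg_sq_div_two
    (measurable_pointer δ 1 0).aestronglyMeasurable (abs_pointer_le hδ 1 0) 0

lemma integral_pointer_mul_exp_neg_sq_div_two {δ : ℝ} (hδ : 0 < δ) (c d : ℝ) :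
    ∫ y : ℝ, pointer δ c d y * exp (-y ^ 2 / 2) =
      c * (∫ y : ℝ, exp (-y ^ 2 / 2) / (y ^ 2 + δ)) + d * √(2 * π) := by
  have hsplit (y : ℝ) : pointer δ c d y * exp (-y ^ 2 / 2) =
      c * (exp (-y ^ 2 / 2) / (y ^ 2 + δ)) + d * exp (-y ^ 2 / 2) := by
    simp only [pointer]; ring
  simp_rw [hsplit]
  rw [integral_add ((integrable_exp_neg_sq_div_two_div_sq_add hδ).const_mul c)
    (integrable_exp_neg_sq_div_two.const_mul d), integral_const_mul, integral_const_mul,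
    integral_exp_neg_sq_div_two]

lemma integral_pointer_mul_id_mul_exp_neg_sq_div_two (δ c d : ℝ) :
    ∫ y : ℝ, pointer δ c d y * y * exp (-y ^ 2 / 2) = 0 :=
  integral_eq_zero_of_odd fun y => by simp only [pointer, neg_sq]; ring

lemma integral_pointer_mul_sq_sub_one_mul_exp_neg_sq_div_two {δ : ℝ} (hδ : 0 < δ) (c d : ℝ) :
    ∫ y : ℝ, pointer δ c d y * (y ^ 2 - 1) * exp (-y ^ 2 / 2) =
      c * (√(2 * π) - (1 + δ) * ∫ y : ℝ, exp (-y ^ 2 / 2) / (y ^ 2 + δ)) := by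
  have hsplit (y : ℝ) : pointer δ c d y * (y ^ 2 - 1) * exp (-y ^ 2 / 2) =
      (c * exp (-y ^ 2 / 2) + d * (y ^ 2 * exp (-y ^ 2 / 2))) -
        (c * (1 + δ) * (exp (-y ^ 2 / 2) / (y ^ 2 + δ)) + d * exp (-y ^ 2 / 2)) := by
    have : y ^ 2 + δ ≠ 0 := by positivity
    simp only [pointer]; field_simp; ring
  have iG := integrable_exp_neg_sq_div_two
  have iY2G := integrable_pow_mul_exp_neg_sq_div_two 2
  have iL := integrable_exp_neg_sq_div_two_div_sq_add hδ
  simp_rw [hsplit]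
  rw [integral_sub, integral_add (iG.const_mul _) (iY2G.const_mul _),
    integral_add (iL.const_mul _) (iG.const_mul _),
    integral_const_mul, integral_const_mul, integral_const_mul, integral_const_mul,
    integral_exp_neg_sq_div_two, integral_sq_mul_exp_neg_sq_div_two]
  · ring
  · exact (iG.const_mul _).add (iY2G.const_mul _)
  · exact (iL.const_mul _).add (iG.const_mul _)

theorem stmt_17_general (δ β : ℝ) (hδ : 0 < δ) (hβ0 : 0 < β)
    (hne : Real.sqrt (2 * π) -
      (1 + δ) * (∫ y : ℝ, Real.exp (-y ^ 2 / 2) / (y ^ 2 + δ)) ≠ 0)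
    (D₂ D₃ : ℝ)
    (hD₂ : D₂ = 2 * Real.sqrt (2 * π) /
      (β ^ 2 * (Real.sqrt (2 * π) -
        (1 + δ) * ∫ y : ℝ, Real.exp (-y ^ 2 / 2) / (y ^ 2 + δ))))
    (hD₃ : D₃ = -(Real.sqrt (2 * π) +
        (∫ y : ℝ, Real.exp (-y ^ 2 / 2) / (y ^ 2 + δ)) * D₂) / Real.sqrt (2 * π))
    (h : ℝ → ℝ) (hh : h = fun y => D₂ / (y ^ 2 + δ) + D₃) :
    (∀ Px Pz : ℝ, ∫ y : ℝ, h y * q β Px Pz y = Pz) ∧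
    ((1 / Real.sqrt (2 * π)) * ∫ y : ℝ, h y * Real.exp (-y ^ 2 / 2) = -1) ∧
    ((β ^ 2 / Real.sqrt (2 * π)) *
        ∫ y : ℝ, h y * (y ^ 2 - 1) * Real.exp (-y ^ 2 / 2) = 2) ∧
    (∫ y : ℝ, h y * y * Real.exp (-y ^ 2 / 2) = 0) := by
  rw [show h = pointer δ D₂ D₃ from hh]
  generalize hI : (∫ y : ℝ, exp (-y ^ 2 / 2) / (y ^ 2 + δ)) = I at hne hD₂ hD₃
  have hS : √(2 * π) ≠ 0 := by positivity
  have hβ : β ≠ 0 := hβ0.ne'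
  have hM0 : ∫ y : ℝ, pointer δ D₂ D₃ y * exp (-y ^ 2 / 2) = -√(2 * π) := by
    rw [integral_pointer_mul_exp_neg_sq_div_two hδ, hI, hD₃]
    field_simp
    ring
  have hM1 := integral_pointer_mul_id_mul_exp_neg_sq_div_two δ D₂ D₃
  have hM2 : ∫ y : ℝ, pointer δ D₂ D₃ y * (y ^ 2 - 1) * exp (-y ^ 2 / 2) =
      2 * √(2 * π) / β ^ 2 := by
    rw [integral_pointer_mul_sq_sub_one_mul_exp_neg_sq_div_two hδ, hI, hD₂]
    field_simp
  refine ⟨fun Px Pz => ?_, ?_, ?_, hM1⟩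
  · rw [integral_mul_q (measurable_pointer δ D₂ D₃).aestronglyMeasurable
      (abs_pointer_le hδ D₂ D₃), hM0, hM1, hM2]
    field_simp
    ring
  · rw [hM0]; field_simp
  · rw [hM2]; field_simp

theorem stmt_17 (δ β : ℝ) (hδ : 0 < δ) (hβ0 : 0 < β) (hβ1 : β ≤ 1)
    (hne : Real.sqrt (2 * π) -
      (1 + δ) * (∫ y : ℝ, Real.exp (-y ^ 2 / 2) / (y ^ 2 + δ)) ≠ 0)
    (D₂ D₃ : ℝ)
    (hD₂ : D₂ = 2 * Real.sqrt (2 * π) /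
      (β ^ 2 * (Real.sqrt (2 * π) -
        (1 + δ) * ∫ y : ℝ, Real.exp (-y ^ 2 / 2) / (y ^ 2 + δ))))
    (hD₃ : D₃ = -(Real.sqrt (2 * π) +
        (∫ y : ℝ, Real.exp (-y ^ 2 / 2) / (y ^ 2 + δ)) * D₂) / Real.sqrt (2 * π))
    (h : ℝ → ℝ) (hh : h = fun y => D₂ / (y ^ 2 + δ) + D₃) :
    (∀ Px Pz : ℝ, ∫ y : ℝ, h y * q β Px Pz y = Pz) ∧
    ((1 / Real.sqrt (2 * π)) * ∫ y : ℝ, h y * Real.exp (-y ^ 2 / 2) = -1) ∧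
    ((β ^ 2 / Real.sqrt (2 * π)) *
        ∫ y : ℝ, h y * (y ^ 2 - 1) * Real.exp (-y ^ 2 / 2) = 2) ∧
    (∫ y : ℝ, h y * y * Real.exp (-y ^ 2 / 2) = 0) :=
  stmt_17_general δ β hδ hβ0 hne D₂ D₃ hD₂ hD₃ h hh
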